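/- Let S be a semigroup, ω a complete congruence on S, and f : S → [0,1] a fuzzy sub-semigroup membership function, i.e. f(x*y) ≥ min(f(x), f(y)) for all x, y ∈ S. Then the lower approximation f̲(z) = ⨅_{z' ∈ [z]ω} f(z') satisfies f̲(x*y) ≥ min(f̲(x), f̲(y)) for all x, y ∈ S. (Theorems 4.1 and 4.3, infimum-approximated component.) -/

import Mathlib

open unitInterval

instance : Fact ((0:ℝ) ≤ 1) := ⟨zero_le_one⟩

/-- Lower rough approximation: infimum of `f` over the ω-class of `z`. -/
noncomputable def lowerApp {S : Type*} (ω : S → S → Prop) (f : S → unitInterval) (z : S) :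
    unitInterval :=
  ⨅ z' : {z' : S // ω z z'}, f z'.1

/-- Upper rough approximation: supremum of `f` over the ω-class of `z`. -/
noncomputable def upperApp {S : Type*} (ω : S → S → Prop) (f : S → unitInterval) (z : S) :
    unitInterval :=
  ⨆ z' : {z' : S // ω z z'}, f z'.1

section LowerApp

variable {S : Type*} {ω : S → S → Prop} {f : S → unitInterval}

theorem lowerApp_le {z z' : S} (h : ω z z') : lowerApp ω f z ≤ f z' :=
  iInf_le (fun w : {w : S // ω z w} => f w.1) ⟨z', h⟩

theorem le_lowerApp_iff {a : unitInterval} {z : S} :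
    a ≤ lowerApp ω f z ↔ ∀ z', ω z z' → a ≤ f z' := by
  rw [lowerApp, le_iInf_iff, Subtype.forall]

end LowerApp

theorem lowerApp_subsemigroup_min_general {S : Type*} [Semigroup S]
    (ω : S → S → Prop)
    (hComplete : ∀ x y c, ω (x * y) c → ∃ a b, ω x a ∧ ω y b ∧ c = a * b)
    (f : S → unitInterval)
    (hf : ∀ x y : S, min (f x) (f y) ≤ f (x * y)) :
    ∀ x y : S, min (lowerApp ω f x) (lowerApp ω f y) ≤ lowerApp ω f (x * y) := by
  intro x y
  refine le_lowerApp_iff.mpr fun c hc => ?_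
  obtain ⟨a, b, ha, hb, rfl⟩ := hComplete x y c hc
  calc min (lowerApp ω f x) (lowerApp ω f y) ≤ min (f a) (f b) :=
        min_le_min (lowerApp_le ha) (lowerApp_le hb)
    _ ≤ f (a * b) := hf a b

theorem lowerApp_subsemigroup_min {S : Type*} [Semigroup S]
    (ω : S → S → Prop) (hEquiv : Equivalence ω)
    (hCong : ∀ x x' y y', ω x x' → ω y y' → ω (x * y) (x' * y'))
    (hComplete : ∀ x y c, ω (x * y) c → ∃ a b, ω x a ∧ ω y b ∧ c = a * b)
    (f : S → unitInterval)
    (hf : ∀ x y : S, min (f x) (f y) ≤ f (x * y)) :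
    ∀ x y : S, min (lowerApp ω f x) (lowerApp ω f y) ≤ lowerApp ω f (x * y) :=
  lowerApp_subsemigroup_min_general ω hComplete f hf
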